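/- Let f, g : ℂ → ℂ be transcendental entire functions, let ϑ : ℂ → ℂ be a homeomorphism of the plane, and let U ⊆ ℂ be a set such that ϑ(f(z)) = g(ϑ(z)) for all z ∈ U, with I(f) ⊆ U and I(g) ⊆ ϑ(U). Suppose in addition that there exist R₀ > 0 and s > 0 such that |ϑ(z)| ≥ |z|^s and |ϑ^{-1}(z)| ≥ |z|^s whenever |z| > R₀. Then for every R > 0, ϑ(X_R(f)) = X_R(g). -/

import Mathlib

/-- A function `f : ℂ → ℂ` is transcendental entire if it is holomorphic on all of `ℂ`
and is not a polynomial. -/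
def TranscendentalEntire (f : ℂ → ℂ) : Prop :=
  Differentiable ℂ f ∧ ¬ ∃ p : Polynomial ℂ, ∀ z, f z = p.eval z

/-- The escaping set `I(f) = { z : |f^n(z)| → ∞ }`. -/
def escapingSet (f : ℂ → ℂ) : Set ℂ :=
  {z | Filter.Tendsto (fun n : ℕ => ‖f^[n] z‖) Filter.atTop Filter.atTop}

/-- The set `X_R(f) = { z : ∃ ℓ, ∀ n, |f^{n+ℓ}(z)| ≥ exp^n(R) }`, where `exp^n` is the
`n`-th iterate of the real exponential. -/
def Xset (f : ℂ → ℂ) (R : ℝ) : Set ℂ :=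
  {z | ∃ ℓ : ℕ, ∀ n : ℕ, Real.exp^[n] R ≤ ‖f^[n + ℓ] z‖}


/-!
Conjugacy on a set containing the escaping set carries orbits of escaping points to orbits, and
`X_R ⊆ I` for every `R`. The only issue is the Hölder distortion `|z| ↦ |z|^s` of `ϑ` and `ϑ⁻¹`,
and it is absorbed by a fixed delay `m` of the orbit: `exp^[m] x` dominates both a given `R₀` and
`x^(1/s)`, uniformly in `x`. The two inclusions are the same statement applied to `ϑ` and `ϑ⁻¹`.
-/

open Real

lemma add_le_iterate_exp (n : ℕ) (x : ℝ) : x + n ≤ exp^[n] x := by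
  induction n generalizing x with
  | zero => simp
  | succ n ih =>
    rw [Function.iterate_succ_apply]
    push_cast
    linarith [ih (exp x), add_one_le_exp x]

lemma exp_one_mul_le_exp (x : ℝ) : exp 1 * x ≤ exp x := by
  calc exp 1 * x ≤ exp 1 * exp (x - 1) := by gcongr; linarith [add_one_le_exp (x - 1)]
    _ = exp x := by rw [← exp_add]; ring_nf

lemma exp_one_pow_mul_le_iterate_exp (k : ℕ) (x : ℝ) : exp 1 ^ k * x ≤ exp^[k] x := by
  induction k with
  | zero => simp
  | succ k ih =>
    rw [Function.iterate_succ_apply', pow_succ', mul_assoc]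
    exact (mul_le_mul_of_nonneg_left ih (exp_pos 1).le).trans (exp_one_mul_le_exp _)

lemma exists_iterate_exp_gt_and_le_rpow (R₀ : ℝ) {s : ℝ} (hs : 0 < s) :
    ∃ m : ℕ, ∀ x : ℝ, R₀ < exp^[m] x ∧ x ≤ exp^[m] x ^ s := by
  have hgrowth : Filter.Tendsto (fun k : ℕ => s * exp 1 ^ k) Filter.atTop Filter.atTop :=
    (tendsto_pow_atTop_atTop_of_one_lt (one_lt_exp_iff.2 one_pos)).const_mul_atTop hs
  obtain ⟨k, hkR₀, hks⟩ := ((tendsto_natCast_atTop_atTop.eventually_gt_atTop R₀).and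
    (hgrowth.eventually_ge_atTop 1)).exists
  refine ⟨k + 1, fun x => ⟨?_, ?_⟩⟩
  · rw [Function.iterate_succ_apply]
    linarith [add_le_iterate_exp k (exp x), exp_pos x]
  · rw [Function.iterate_succ_apply', ← exp_mul]
    rcases lt_or_ge x 0 with hx | hx
    · exact hx.le.trans (exp_pos _).le
    calc x ≤ s * exp 1 ^ k * x := le_mul_of_one_le_left hx hks
      _ ≤ exp^[k] x * s := by
        rw [mul_assoc, mul_comm]
        exact mul_le_mul_of_nonneg_right (exp_one_pow_mul_le_iterate_exp k x) hs.le
      _ ≤ exp (exp^[k] x * s) := by linarith [add_one_le_exp (exp^[k] x * s)]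

lemma iterate_mem_escapingSet {f : ℂ → ℂ} {z : ℂ} (hz : z ∈ escapingSet f) (k : ℕ) :
    f^[k] z ∈ escapingSet f := by
  simp only [escapingSet, Set.mem_ofPred_eq, ← Function.iterate_add_apply]
  exact (Filter.tendsto_add_atTop_iff_nat k).2 hz

lemma Xset_subset_escapingSet (f : ℂ → ℂ) (R : ℝ) : Xset f R ⊆ escapingSet f := by
  rintro z ⟨ℓ, hℓ⟩
  refine (Filter.tendsto_add_atTop_iff_nat ℓ).1 (Filter.tendsto_atTop_mono (fun n => hℓ n) ?_)
  refine Filter.tendsto_atTop_mono (fun n => add_le_iterate_exp n R) ?_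
  exact Filter.tendsto_atTop_add_const_left _ R tendsto_natCast_atTop_atTop

lemma map_iterate_of_semiconj_on_orbit {α β : Type*} {f : α → α} {g : β → β} {φ : α → β}
    {U : Set α} (hconj : ∀ z ∈ U, φ (f z) = g (φ z)) {z : α} (horbit : ∀ k, f^[k] z ∈ U)
    (k : ℕ) : φ (f^[k] z) = g^[k] (φ z) := by
  induction k with
  | zero => rfl
  | succ k ih =>
    rw [Function.iterate_succ_apply', Function.iterate_succ_apply', hconj _ (horbit k), ih]

lemma image_Xset_subset_of_semiconj {f g φ : ℂ → ℂ} {U : Set ℂ}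
    (hconj : ∀ z ∈ U, φ (f z) = g (φ z)) (hIf : escapingSet f ⊆ U) {R₀ s : ℝ} (hs : 0 < s)
    (hφ : ∀ z, R₀ < ‖z‖ → ‖z‖ ^ s ≤ ‖φ z‖) (R : ℝ) : φ '' Xset f R ⊆ Xset g R := by
  rintro _ ⟨z, ⟨ℓ, hℓ⟩, rfl⟩
  have horbit k : f^[k] z ∈ U :=
    hIf (iterate_mem_escapingSet (Xset_subset_escapingSet f R ⟨ℓ, hℓ⟩) k)
  obtain ⟨m, hm⟩ := exists_iterate_exp_gt_and_le_rpow (max R₀ 0) hs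
  refine ⟨m + ℓ, fun n => ?_⟩
  obtain ⟨hmax, hle⟩ := hm (exp^[n] R)
  obtain ⟨hR₀, hpos⟩ := max_lt_iff.1 hmax
  have hdelay : exp^[m] (exp^[n] R) ≤ ‖f^[n + (m + ℓ)] z‖ := by
    rw [← Function.iterate_add_apply, add_comm m n, ← add_assoc]
    exact hℓ (n + m)
  rw [← map_iterate_of_semiconj_on_orbit hconj horbit]
  calc exp^[n] R ≤ exp^[m] (exp^[n] R) ^ s := hle
    _ ≤ ‖f^[n + (m + ℓ)] z‖ ^ s := by gcongr
    _ ≤ ‖φ (f^[n + (m + ℓ)] z)‖ := hφ _ (hR₀.trans_le hdelay)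

theorem image_Xset_eq_of_conj_general
    (f g : ℂ → ℂ)
    (ϑ : ℂ ≃ₜ ℂ) (U : Set ℂ)
    (hconj : ∀ z ∈ U, ϑ (f z) = g (ϑ z))
    (hIf : escapingSet f ⊆ U) (hIg : escapingSet g ⊆ ϑ '' U)
    (hHolder : ∃ R₀ > (0 : ℝ), ∃ s > (0 : ℝ), ∀ z : ℂ, R₀ < ‖z‖ →
      ‖z‖ ^ s ≤ ‖ϑ z‖ ∧ ‖z‖ ^ s ≤ ‖ϑ.symm z‖) :
    ∀ R : ℝ, 0 < R → ϑ '' Xset f R = Xset g R := by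
  obtain ⟨R₀, -, s, hs, hH⟩ := hHolder
  intro R _
  have hconj_symm : ∀ w ∈ ϑ '' U, ϑ.symm (g w) = f (ϑ.symm w) := by
    rintro _ ⟨z, hz, rfl⟩
    rw [← hconj z hz, ϑ.symm_apply_apply, ϑ.symm_apply_apply]
  refine (image_Xset_subset_of_semiconj hconj hIf hs (fun z hz => (hH z hz).1) R).antisymm ?_
  rw [← ϑ.preimage_symm, ← Set.image_subset_iff]
  exact image_Xset_subset_of_semiconj hconj_symm hIg hs (fun z hz => (hH z hz).2) R

theorem image_Xset_eq_of_conj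
    (f g : ℂ → ℂ) (hf : TranscendentalEntire f) (hg : TranscendentalEntire g)
    (ϑ : ℂ ≃ₜ ℂ) (U : Set ℂ)
    (hconj : ∀ z ∈ U, ϑ (f z) = g (ϑ z))
    (hIf : escapingSet f ⊆ U) (hIg : escapingSet g ⊆ ϑ '' U)
    (hHolder : ∃ R₀ > (0 : ℝ), ∃ s > (0 : ℝ), ∀ z : ℂ, R₀ < ‖z‖ →
      ‖z‖ ^ s ≤ ‖ϑ z‖ ∧ ‖z‖ ^ s ≤ ‖ϑ.symm z‖) :
    ∀ R : ℝ, 0 < R → ϑ '' Xset f R = Xset g R :=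
  image_Xset_eq_of_conj_general f g ϑ U hconj hIf hIg hHolder
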